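/- arXiv:gr-qc/0110114 — 2 statements merged into one kernel-verified Lean document; each statement's English description precedes it below -/
import Mathlib

section
/- Let k₁ ≥ k₂ ≥ 1 be real numbers, let p₁, p₂, s be real, and set j₁₂ = 1/2 + i s. Define g(t) = (1-t)^{i p₁ + i p₂ + j₁₂ - 1} · t^{-i p₂ + k₂ - 1} · ₂F₁(j₁₂-k₁+k₂, j₁₂+k₁+k₂-1; 2j₁₂; 1-t) for t ∈ (1/2,1). Then g is integrable with respect to Lebesgue measure on (1/2,1), and lim_{t → 1⁻} (1-t)^{1/2} · |g(t)| = 1. (In the continuous-series case the second integrand of I(+,−,𝒥) diverges like (1-t)^{-1/2} as t → 1, which is insufficient to prevent the integral converging.) -/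
open Complex Filter Set MeasureTheory

/-- The `n`-th term of the Gauss hypergeometric series `₂F₁(a,b;c;z)`. -/
noncomputable def hypTerm (a b c z : ℂ) (n : ℕ) : ℂ :=
  (ascPochhammer ℂ n).eval a * (ascPochhammer ℂ n).eval b /
    ((ascPochhammer ℂ n).eval c * (n.factorial : ℂ)) * z ^ n

/-- The Gauss hypergeometric function `₂F₁(a,b;c;z)`. -/
noncomputable def hyp (a b c z : ℂ) : ℂ := ∑' n, hypTerm a b c z n

/-- The integrand of the second integral of `I(+,−,𝒥)` in the continuous-series case,
with `j₁₂ = 1/2 + is`: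
`g(t) = (1-t)^(ip₁+ip₂+j₁₂-1) t^(-ip₂+k₂-1) ₂F₁(j₁₂-k₁+k₂, j₁₂+k₁+k₂-1; 2j₁₂; 1-t)`. -/
noncomputable def gPNC (k₁ k₂ p₁ p₂ s : ℝ) (t : ℝ) : ℂ :=
  ((1 - t : ℝ) : ℂ) ^ (I * (p₁ : ℂ) + I * (p₂ : ℂ) + (1 / 2 + I * (s : ℂ)) - 1) *
    ((t : ℝ) : ℂ) ^ (-(I * (p₂ : ℂ)) + (k₂ : ℂ) - 1) *
    hyp ((1 / 2 + I * (s : ℂ)) - k₁ + k₂) ((1 / 2 + I * (s : ℂ)) + k₁ + k₂ - 1)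
      (2 * (1 / 2 + I * (s : ℂ))) ((1 - t : ℝ) : ℂ)

lemma tendsto_aux (a : ℂ) : Tendsto (fun n : ℕ => ‖a + n‖ / (n + 1)) atTop (nhds 1) := by
  have h0 : Tendsto (fun n : ℕ => ‖a - 1‖ * (1 / ((n:ℝ) + 1))) atTop (nhds 0) := by
    simpa using tendsto_one_div_add_atTop_nhds_zero_nat.const_mul ‖a - 1‖
  rw [tendsto_iff_dist_tendsto_zero]
  refine squeeze_zero (fun n => dist_nonneg) (fun n => ?_) h0
  have hn : (0:ℝ) < (n:ℝ) + 1 := by positivity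
  rw [Real.dist_eq]
  have h1 : ‖a + n‖ / ((n:ℝ) + 1) - 1 = (‖a + n‖ - ((n:ℝ) + 1)) / ((n:ℝ) + 1) := by
    field_simp
  rw [h1, abs_div, abs_of_pos hn, div_le_iff₀ hn]
  have h2 : ((n:ℝ) + 1) = ‖((n:ℂ) + 1)‖ := by
    rw [show ((n:ℂ) + 1) = ((n + 1 : ℕ) : ℂ) by push_cast; ring, Complex.norm_natCast]
    push_cast; ring
  have h3 := abs_norm_sub_norm_le (a + (n:ℂ)) ((n:ℂ) + 1)
  have h4 : a + (n:ℂ) - ((n:ℂ) + 1) = a - 1 := by ring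
  rw [h4] at h3
  calc |‖a + (n:ℂ)‖ - ((n:ℝ) + 1)| = |‖a + (n:ℂ)‖ - ‖((n:ℂ) + 1)‖| := by rw [h2]
    _ ≤ ‖a - 1‖ := h3
    _ ≤ ‖a - 1‖ * (1 / ((n:ℝ)+1)) * ((n:ℝ)+1) := by
        rw [mul_assoc, one_div_mul_cancel hn.ne', mul_one]

/-- norm of the hypergeometric coefficient -/
noncomputable def hypCoefN (a b c : ℂ) (n : ℕ) : ℝ :=
  ‖(ascPochhammer ℂ n).eval a * (ascPochhammer ℂ n).eval b /
    ((ascPochhammer ℂ n).eval c * (n.factorial : ℂ))‖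

lemma one_le_pc (c : ℂ) (hc : ∀ n : ℕ, 1 ≤ ‖c + (n:ℂ)‖) (n : ℕ) :
    1 ≤ ‖(ascPochhammer ℂ n).eval c‖ := by
  induction n with
  | zero => simp
  | succ n ih =>
    rw [ascPochhammer_succ_eval, norm_mul]
    calc (1:ℝ) = 1 * 1 := (one_mul 1).symm
      _ ≤ _ := mul_le_mul ih (hc n) zero_le_one (le_trans zero_le_one ih)

lemma hypCoefN_succ (a b c : ℂ) (hc : ∀ n : ℕ, 1 ≤ ‖c + (n:ℂ)‖) (n : ℕ) :
    hypCoefN a b c (n+1) =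
      hypCoefN a b c n * (‖a + (n:ℂ)‖ * ‖b + (n:ℂ)‖ / (‖c + (n:ℂ)‖ * ((n:ℝ) + 1))) := by
  have hpc : (0:ℝ) < ‖(ascPochhammer ℂ n).eval c‖ := lt_of_lt_of_le one_pos (one_le_pc c hc n)
  have hcn : (0:ℝ) < ‖c + (n:ℂ)‖ := lt_of_lt_of_le one_pos (hc n)
  have hfac : (0:ℝ) < ‖((n.factorial : ℕ) : ℂ)‖ := by
    rw [Complex.norm_natCast]; exact_mod_cast n.factorial_pos
  have hn1 : (0:ℝ) < (n:ℝ) + 1 := by positivity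
  unfold hypCoefN
  rw [ascPochhammer_succ_eval, ascPochhammer_succ_eval, ascPochhammer_succ_eval,
    Nat.factorial_succ, Nat.cast_mul]
  have hcast : ‖((n + 1 : ℕ) : ℂ)‖ = (n:ℝ) + 1 := by
    rw [Complex.norm_natCast]; push_cast; ring
  rw [norm_div, norm_div, norm_mul, norm_mul, norm_mul, norm_mul, norm_mul, norm_mul, hcast]
  field_simp
  simp only [norm_mul]
  ring

lemma summable_M (a b c : ℂ) (hc : ∀ n : ℕ, 1 ≤ ‖c + (n:ℂ)‖) :
    Summable (fun n : ℕ => hypCoefN a b c n * (1/2) ^ n) := by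
  have hA := tendsto_aux a
  have hB := tendsto_aux b
  have hC := tendsto_aux c
  have hq : Tendsto (fun n : ℕ =>
      ‖a + (n:ℂ)‖ * ‖b + (n:ℂ)‖ / (‖c + (n:ℂ)‖ * ((n:ℝ) + 1))) atTop (nhds 1) := by
    have hmul := (hA.mul (hB.div hC one_ne_zero))
    refine Tendsto.congr (fun n => ?_) (by simpa using hmul)
    have h1 : ((n:ℝ) + 1) ≠ 0 := by positivity
    have h2 : ‖c + (n:ℂ)‖ ≠ 0 := (lt_of_lt_of_le one_pos (hc n)).ne'
    field_simp
  have hev : ∀ᶠ n : ℕ in atTop,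
      ‖a + (n:ℂ)‖ * ‖b + (n:ℂ)‖ / (‖c + (n:ℂ)‖ * ((n:ℝ) + 1)) < 3/2 :=
    hq.eventually_lt_const (by norm_num)
  refine summable_of_ratio_norm_eventually_le (r := 3/4) (by norm_num) ?_
  filter_upwards [hev] with n hqn
  have h0 : 0 ≤ hypCoefN a b c n := norm_nonneg _
  have h0' : 0 ≤ hypCoefN a b c n * (1/2)^n := by positivity
  have hq0 : 0 ≤ ‖a + (n:ℂ)‖ * ‖b + (n:ℂ)‖ / (‖c + (n:ℂ)‖ * ((n:ℝ) + 1)) := by positivity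
  have h0'' : (0:ℝ) ≤ hypCoefN a b c (n+1) * (1/2)^(n+1) :=
    mul_nonneg (norm_nonneg _) (by positivity)
  rw [Real.norm_eq_abs, Real.norm_eq_abs, _root_.abs_of_nonneg h0'', _root_.abs_of_nonneg h0',
    hypCoefN_succ a b c hc n]
  calc hypCoefN a b c n * (‖a + (n:ℂ)‖ * ‖b + (n:ℂ)‖ / (‖c + (n:ℂ)‖ * ((n:ℝ) + 1))) * (1/2)^(n+1)
      ≤ hypCoefN a b c n * (3/2) * (1/2)^(n+1) := by
        apply mul_le_mul_of_nonneg_right _ (by positivity)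
        exact mul_le_mul_of_nonneg_left hqn.le h0
    _ = 3/4 * (hypCoefN a b c n * (1/2)^n) := by ring

lemma hypTerm_norm_le (a b c z : ℂ) (hz : ‖z‖ ≤ 1/2) (n : ℕ) :
    ‖hypTerm a b c z n‖ ≤ hypCoefN a b c n * (1/2)^n := by
  rw [hypTerm, norm_mul, norm_pow]
  exact mul_le_mul_of_nonneg_left (pow_le_pow_left₀ (norm_nonneg z) hz n) (norm_nonneg _)

lemma hyp_continuousOn (a b c : ℂ) (hc : ∀ n : ℕ, 1 ≤ ‖c + (n:ℂ)‖) :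
    ContinuousOn (hyp a b c) (Metric.closedBall 0 (1/2)) := by
  have hsum := summable_M a b c hc
  have hb : ∀ (n : ℕ) (z : ℂ), z ∈ Metric.closedBall (0:ℂ) (1/2) →
      ‖hypTerm a b c z n‖ ≤ hypCoefN a b c n * (1/2)^n := by
    intro n z hz
    exact hypTerm_norm_le a b c z (by simpa [Metric.mem_closedBall, dist_zero_right] using hz) n
  have := tendstoUniformlyOn_tsum hsum hb
  exact this.continuousOn (Filter.Frequently.of_forall fun t =>
    (continuous_finset_sum t fun n _ => by
      unfold hypTerm; exact (continuous_const.mul (continuous_pow n))).continuousOn)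

lemma hyp_norm_le (a b c z : ℂ) (hc : ∀ n : ℕ, 1 ≤ ‖c + (n:ℂ)‖) (hz : ‖z‖ ≤ 1/2) :
    ‖hyp a b c z‖ ≤ ∑' n, hypCoefN a b c n * (1/2)^n :=
  tsum_of_norm_bounded (summable_M a b c hc).hasSum (hypTerm_norm_le a b c z hz)

lemma hyp_zero (a b c : ℂ) : hyp a b c 0 = 1 := by
  rw [hyp, tsum_eq_single 0 (fun n hn => by simp [hypTerm, zero_pow hn])]
  simp [hypTerm]

/-- For `k₁ ≥ k₂ ≥ 1` and `j₁₂ = 1/2 + is`, the second integrand of `I(+,−,𝒥)`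
is integrable on `(1/2,1)` and diverges like `(1-t)^(-1/2)` as `t → 1⁻`,
which is insufficient to prevent the integral converging. -/
theorem integral_PN_second_piece_continuous (k₁ k₂ p₁ p₂ s : ℝ)
    (h21 : k₂ ≤ k₁) (h2 : 1 ≤ k₂) :
    IntegrableOn (gPNC k₁ k₂ p₁ p₂ s) (Ioo (1 / 2) 1) volume ∧
    Tendsto (fun t : ℝ => (1 - t) ^ ((1 : ℝ) / 2) * ‖gPNC k₁ k₂ p₁ p₂ s t‖)
      (nhdsWithin 1 (Iio 1)) (nhds 1) := by
  set a : ℂ := (1 / 2 + I * (s : ℂ)) - k₁ + k₂ with ha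
  set b : ℂ := (1 / 2 + I * (s : ℂ)) + k₁ + k₂ - 1 with hb
  set c : ℂ := 2 * (1 / 2 + I * (s : ℂ)) with hcdef
  set w₁ : ℂ := I * (p₁ : ℂ) + I * (p₂ : ℂ) + (1 / 2 + I * (s : ℂ)) - 1 with hw₁
  set w₂ : ℂ := -(I * (p₂ : ℂ)) + (k₂ : ℂ) - 1 with hw₂
  have hc : ∀ n : ℕ, 1 ≤ ‖c + (n:ℂ)‖ := by
    intro n
    have hre : (c + (n:ℂ)).re = 1 + n := by
      simp [hcdef, Complex.add_re, Complex.mul_re]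
    calc (1:ℝ) ≤ 1 + n := le_add_of_nonneg_right (Nat.cast_nonneg n)
      _ = (c + (n:ℂ)).re := hre.symm
      _ ≤ ‖c + (n:ℂ)‖ := Complex.re_le_norm _
      _ = ‖c + (n:ℂ)‖ := rfl
  have hrw₁ : w₁.re = -(1/2) := by
    simp [hw₁, Complex.add_re, Complex.sub_re, Complex.mul_re]
    norm_num
  have hrw₂ : w₂.re = k₂ - 1 := by
    simp [hw₂, Complex.add_re, Complex.sub_re, Complex.mul_re]
  have hgdef : gPNC k₁ k₂ p₁ p₂ s = fun t : ℝ =>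
      ((1 - t : ℝ) : ℂ) ^ w₁ * ((t : ℝ) : ℂ) ^ w₂ * hyp a b c ((1 - t : ℝ) : ℂ) := rfl
  have hmem : ∀ t ∈ Ioo (1/2 : ℝ) 1, ((1 - t : ℝ) : ℂ) ∈ Metric.closedBall (0:ℂ) (1/2) := by
    intro t ht
    rw [Metric.mem_closedBall, dist_zero_right, Complex.norm_real, Real.norm_eq_abs,
      abs_of_pos (by linarith [ht.2])]
    linarith [ht.1]
  have habs : ∀ t ∈ Ioo (1/2 : ℝ) 1, ‖gPNC k₁ k₂ p₁ p₂ s t‖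
      = (1 - t) ^ (-(1/2) : ℝ) * t ^ (k₂ - 1) * ‖hyp a b c ((1 - t : ℝ) : ℂ)‖ := by
    intro t ht
    have h1t : (0:ℝ) < 1 - t := by linarith [ht.2]
    have h0t : (0:ℝ) < t := by linarith [ht.1]
    rw [hgdef, norm_mul, norm_mul, Complex.norm_cpow_eq_rpow_re_of_pos h1t,
      Complex.norm_cpow_eq_rpow_re_of_pos h0t, hrw₁, hrw₂]
  set B : ℝ := ∑' n, hypCoefN a b c n * (1/2)^n with hBdef
  have hbound : ∀ t ∈ Ioo (1/2 : ℝ) 1,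
      ‖gPNC k₁ k₂ p₁ p₂ s t‖ ≤ B * (1 - t) ^ (-(1/2) : ℝ) := by
    intro t ht
    have h1t : (0:ℝ) < 1 - t := by linarith [ht.2]
    have h0t : (0:ℝ) < t := by linarith [ht.1]
    rw [habs t ht]
    have ht1 : t ^ (k₂ - 1) ≤ 1 :=
      Real.rpow_le_one h0t.le ht.2.le (by linarith)
    have hhyp : ‖hyp a b c ((1 - t : ℝ) : ℂ)‖ ≤ B := by
      apply hyp_norm_le a b c _ hc
      rw [Complex.norm_real, Real.norm_eq_abs, abs_of_pos h1t]
      linarith [ht.1]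
    calc (1 - t) ^ (-(1/2) : ℝ) * t ^ (k₂ - 1) * ‖hyp a b c ((1 - t : ℝ) : ℂ)‖
        ≤ (1 - t) ^ (-(1/2) : ℝ) * 1 * B := by
          apply mul_le_mul (mul_le_mul_of_nonneg_left ht1 (by positivity)) hhyp
            (norm_nonneg _) (by positivity)
      _ = B * (1 - t) ^ (-(1/2) : ℝ) := by ring
  have hcontg : ContinuousOn (gPNC k₁ k₂ p₁ p₂ s) (Ioo (1/2 : ℝ) 1) := by
    rw [hgdef]
    have c1 : ContinuousOn (fun t : ℝ => ((1 - t : ℝ) : ℂ) ^ w₁) (Ioo (1/2 : ℝ) 1) := by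
      intro t ht
      exact ((continuousAt_ofReal_cpow_const (1 - t) w₁
        (Or.inr (by linarith [ht.2] : (1:ℝ) - t ≠ 0))).comp
        ((continuous_const.sub continuous_id).continuousAt)).continuousWithinAt
    have c2 : ContinuousOn (fun t : ℝ => ((t : ℝ) : ℂ) ^ w₂) (Ioo (1/2 : ℝ) 1) := by
      intro t ht
      exact (continuousAt_ofReal_cpow_const t w₂
        (Or.inr (by linarith [ht.1] : t ≠ 0))).continuousWithinAt
    have c3 : ContinuousOn (fun t : ℝ => hyp a b c ((1 - t : ℝ) : ℂ)) (Ioo (1/2 : ℝ) 1) := by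
      apply (hyp_continuousOn a b c hc).comp
        ((Complex.continuous_ofReal.comp (continuous_const.sub continuous_id)).continuousOn)
      intro t ht
      exact hmem t ht
    exact (c1.mul c2).mul c3
  constructor
  · have base : IntegrableOn (fun x : ℝ => x ^ (-(1/2) : ℝ)) (Ioo (0:ℝ) (1/2)) :=
      (intervalIntegral.integrableOn_Ioo_rpow_iff (by norm_num)).2 (by norm_num)
    have hmp : MeasurePreserving (fun x : ℝ => 1 - x) volume volume :=
      Measure.measurePreserving_sub_left volume 1
    have hpre : (fun x : ℝ => 1 - x) ⁻¹' (Ioo (0:ℝ) (1/2)) = Ioo (1/2 : ℝ) 1 := by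
      ext x
      simp only [mem_preimage, mem_Ioo]
      constructor <;> rintro ⟨hx1, hx2⟩ <;> constructor <;> linarith
    have hint1 : IntegrableOn (fun t : ℝ => (1 - t) ^ (-(1/2) : ℝ)) (Ioo (1/2 : ℝ) 1) := by
      have := (hmp.integrableOn_comp_preimage
        (Homeomorph.subLeft (1:ℝ)).measurableEmbedding).2 base
      rw [hpre] at this
      exact this
    have hint : IntegrableOn (fun t : ℝ => B * (1 - t) ^ (-(1/2) : ℝ)) (Ioo (1/2 : ℝ) 1) :=
      hint1.const_mul B
    refine hint.mono' (hcontg.aestronglyMeasurable measurableSet_Ioo) ?_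
    exact (ae_restrict_iff' measurableSet_Ioo).2 (Eventually.of_forall hbound)
  · have hIoo : Ioo (1/2 : ℝ) 1 ∈ nhdsWithin (1:ℝ) (Iio 1) :=
      Ioo_mem_nhdsLT_of_mem (by constructor <;> norm_num)
    have heq : (fun t : ℝ => t ^ (k₂ - 1) * ‖hyp a b c ((1 - t : ℝ) : ℂ)‖)
        =ᶠ[nhdsWithin (1:ℝ) (Iio 1)]
        (fun t : ℝ => (1 - t) ^ ((1:ℝ)/2) * ‖gPNC k₁ k₂ p₁ p₂ s t‖) := by
      filter_upwards [hIoo] with t ht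
      have h1t : (0:ℝ) < 1 - t := by linarith [ht.2]
      rw [habs t ht, show (1 - t) ^ ((1:ℝ)/2) * ((1 - t) ^ (-(1/2) : ℝ) * t ^ (k₂ - 1) *
          ‖hyp a b c ((1 - t : ℝ) : ℂ)‖)
        = ((1 - t) ^ ((1:ℝ)/2) * (1 - t) ^ (-(1/2) : ℝ)) *
          (t ^ (k₂ - 1) * ‖hyp a b c ((1 - t : ℝ) : ℂ)‖) by ring,
        ← Real.rpow_add h1t]
      norm_num
    refine Tendsto.congr' heq ?_
    have T1 : Tendsto (fun t : ℝ => t ^ (k₂ - 1)) (nhdsWithin (1:ℝ) (Iio 1)) (nhds 1) := by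
      have hca : ContinuousAt (fun t : ℝ => t ^ (k₂ - 1)) 1 :=
        Real.continuousAt_rpow_const 1 (k₂ - 1) (Or.inl one_ne_zero)
      have := hca.tendsto.mono_left (nhdsWithin_le_nhds (s := Iio (1:ℝ)))
      simpa [Real.one_rpow] using this
    have hz : Tendsto (fun t : ℝ => ((1 - t : ℝ) : ℂ)) (nhdsWithin (1:ℝ) (Iio 1))
        (nhdsWithin 0 (Metric.closedBall (0:ℂ) (1/2))) := by
      rw [tendsto_nhdsWithin_iff]
      constructor
      · have hcont : Continuous (fun t : ℝ => ((1 - t : ℝ) : ℂ)) :=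
          Complex.continuous_ofReal.comp (continuous_const.sub continuous_id)
        have := (hcont.tendsto 1).mono_left (nhdsWithin_le_nhds (s := Iio (1:ℝ)))
        simpa using this
      · filter_upwards [hIoo] with t ht using hmem t ht
    have hhyp : Tendsto (fun t : ℝ => hyp a b c ((1 - t : ℝ) : ℂ))
        (nhdsWithin (1:ℝ) (Iio 1)) (nhds 1) := by
      have hcw : ContinuousWithinAt (hyp a b c) (Metric.closedBall (0:ℂ) (1/2)) 0 :=
        (hyp_continuousOn a b c hc) 0 (by simp [Metric.mem_closedBall])
      have := hcw.tendsto.comp hz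
      rwa [hyp_zero] at this
    have T2 : Tendsto (fun t : ℝ => ‖hyp a b c ((1 - t : ℝ) : ℂ)‖)
        (nhdsWithin (1:ℝ) (Iio 1)) (nhds 1) := by
      have := (continuous_norm.tendsto 1).comp hhyp
      simpa [Function.comp_def] using this
    simpa using T1.mul T2
end

section
/- Let k₁ ≥ 1 and k₁₂ ≥ 1 be real numbers and let s₂, p₁, p₂ be real. Then the complex-valued function t ↦ t^{-i s₂ - i p₂ - 1/2} · (1-t)^{-k₁₂ + i p₁ + i p₂} · ₂F₁(1/2+k₁-k₁₂-i s₂, 3/2-k₁-k₁₂-i s₂; 1-2i s₂; t) is integrable with respect to Lebesgue measure on (0,1/2), and the function t ↦ t^{-i s₂ - i p₂ - 1/2} · (1-t)^{k₁₂ - 1 + i p₁ + i p₂} · ₂F₁(1/2+k₁+k₁₂-i s₂, -1/2+k₁+k₁₂-i s₂; k₁₂; 1-t) is integrable with respect to Lebesgue measure on (1/2,1). (Convergence of the two pieces of the integral I₁(+,C,+) for the coupling of a positive discrete series with a continuous series to a positive discrete series.) -/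
open Complex Filter Set MeasureTheory

/-! Once `hyp` is identified with Mathlib's `ordinaryHypergeometric`, whose power series has
radius at least `1` as soon as `c` is not a nonpositive integer, `₂F₁` is continuous on the
open unit disc. On `(0, 1/2)` the factor `(1-t)^β ₂F₁(…; t)` is then continuous on the compact
interval `[0, 1/2]`, hence bounded, while `t^α` is integrable because `Re α = -1/2 > -1`.
Symmetrically, on `(1/2, 1)` the factor `t^α ₂F₁(…; 1-t)` is bounded and `(1-t)^β` is
integrable because `Re β = k₁₂ - 1 > -1`. -/

section OrdinaryHypergeometric

variable {𝕂 𝔸 : Type*} [RCLike 𝕂] [NormedDivisionRing 𝔸] [NormedAlgebra 𝕂 𝔸]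

theorem one_le_radius_ordinaryHypergeometricSeries {a b c : 𝕂} (hc : ∀ n : ℕ, (n : 𝕂) ≠ -c) :
    1 ≤ (ordinaryHypergeometricSeries 𝔸 a b c).radius := by
  by_cases ha : ∃ k : ℕ, a = -k
  · obtain ⟨k, rfl⟩ := ha
    simp [ordinaryHypergeometric_radius_top_of_neg_nat₁]
  by_cases hb : ∃ k : ℕ, b = -k
  · obtain ⟨k, rfl⟩ := hb
    simp [ordinaryHypergeometric_radius_top_of_neg_nat₂]
  push Not at ha hb
  refine (ordinaryHypergeometricSeries_radius_eq_one 𝔸 a b c fun n => ⟨?_, ?_, hc n⟩).ge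
  · exact fun h => ha n (by rw [h, neg_neg])
  · exact fun h => hb n (by rw [h, neg_neg])

theorem continuousOn_ordinaryHypergeometric [CompleteSpace 𝔸] {a b c : 𝕂}
    (hc : ∀ n : ℕ, (n : 𝕂) ≠ -c) :
    ContinuousOn (ordinaryHypergeometric a b c : 𝔸 → 𝔸) (Metric.ball 0 1) := by
  refine FormalMultilinearSeries.continuousOn.mono fun x hx => ?_
  refine Metric.eball_subset_eball (one_le_radius_ordinaryHypergeometricSeries hc) ?_
  rwa [← ENNReal.coe_one, Metric.eball_coe, NNReal.coe_one]

end OrdinaryHypergeometric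

theorem hyp_eq_ordinaryHypergeometric (a b c z : ℂ) :
    hyp a b c z = ordinaryHypergeometric a b c z := by
  rw [ordinaryHypergeometric_eq_tsum]
  refine tsum_congr fun n => ?_
  rw [hypTerm, smul_eq_mul]
  ring

theorem continuousOn_hyp {a b c : ℂ} (hc : ∀ n : ℕ, (n : ℂ) ≠ -c) :
    ContinuousOn (hyp a b c) (Metric.ball 0 1) := by
  simpa only [funext (hyp_eq_ordinaryHypergeometric a b c)]
    using continuousOn_ordinaryHypergeometric hc

theorem integrableOn_Ioo_cpow_mul {α : ℂ} (hα : -1 < α.re) {r : ℝ} {g : ℝ → ℂ}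
    (hg : ContinuousOn g (Icc 0 r)) :
    IntegrableOn (fun t : ℝ => (t : ℂ) ^ α * g t) (Ioo 0 r) := by
  have hpow : IntegrableOn (fun t : ℝ => (t : ℂ) ^ α) (Ioo 0 r) :=
    (intervalIntegral.intervalIntegrable_cpow' hα).def'.mono_set
      (Ioo_subset_Ioc_self.trans Ioc_subset_uIoc)
  exact hpow.mul_continuousOn_of_subset hg measurableSet_Ioo isCompact_Icc Ioo_subset_Icc_self

theorem integrableOn_Ioo_one_sub_cpow_mul {β : ℂ} (hβ : -1 < β.re) {r : ℝ} {g : ℝ → ℂ}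
    (hg : ContinuousOn g (Icc r 1)) :
    IntegrableOn (fun t : ℝ => ((1 - t : ℝ) : ℂ) ^ β * g t) (Ioo r 1) := by
  have hpow : IntegrableOn (fun t : ℝ => ((1 - t : ℝ) : ℂ) ^ β) (Ioo r 1) := by
    have h :=
      ((intervalIntegral.intervalIntegrable_cpow' hβ (a := 0) (b := 1 - r)).comp_sub_left 1).symm
    rw [sub_zero, sub_sub_cancel] at h
    exact h.def'.mono_set (Ioo_subset_Ioc_self.trans Ioc_subset_uIoc)
  exact hpow.mul_continuousOn_of_subset hg measurableSet_Ioo isCompact_Icc Ioo_subset_Icc_self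

theorem natCast_ne_neg_of_re_pos {c : ℂ} (hc : 0 < c.re) (n : ℕ) : (n : ℂ) ≠ -c := fun h => by
  have := congrArg re h
  simp only [natCast_re, neg_re] at this
  linarith [n.cast_nonneg (α := ℝ)]

theorem ContinuousOn.ofReal_cpow {f : ℝ → ℝ} {s : Set ℝ} (hf : ContinuousOn f s)
    (hpos : ∀ t ∈ s, 0 < f t) (w : ℂ) : ContinuousOn (fun t => (f t : ℂ) ^ w) s :=
  (continuous_ofReal.comp_continuousOn hf).cpow continuousOn_const
    fun t ht => ofReal_mem_slitPlane.2 (hpos t ht)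

theorem ContinuousOn.hyp_ofReal {a b c : ℂ} (hc : 0 < c.re) {f : ℝ → ℝ} {s : Set ℝ}
    (hf : ContinuousOn f s) (hlt : ∀ t ∈ s, |f t| < 1) :
    ContinuousOn (fun t => hyp a b c (f t)) s :=
  (continuousOn_hyp (natCast_ne_neg_of_re_pos hc)).comp (continuous_ofReal.comp_continuousOn hf)
    fun t ht => by simpa using hlt t ht

theorem integrableOn_Ioo_zero_cpow_mul_one_sub_cpow_mul_hyp {α : ℂ} (hα : -1 < α.re) (β : ℂ)
    {a b c : ℂ} (hc : 0 < c.re) {r : ℝ} (hr : r < 1) :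
    IntegrableOn (fun t : ℝ => (t : ℂ) ^ α * ((1 - t : ℝ) : ℂ) ^ β * hyp a b c t) (Ioo 0 r) := by
  have hg : ContinuousOn (fun t : ℝ => ((1 - t : ℝ) : ℂ) ^ β * hyp a b c t) (Icc 0 r) := by
    refine ContinuousOn.mul ?_ ?_
    · exact ContinuousOn.ofReal_cpow (f := fun t => 1 - t) (by fun_prop)
        (fun t ht => by linarith [ht.2]) _
    · exact ContinuousOn.hyp_ofReal (f := fun t => t) hc (by fun_prop)
        fun t ht => abs_lt.2 ⟨by linarith [ht.1], by linarith [ht.2]⟩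
  exact (integrableOn_Ioo_cpow_mul hα hg).congr_fun (fun t _ => by ring) measurableSet_Ioo

theorem integrableOn_Ioo_one_cpow_mul_one_sub_cpow_mul_hyp (α : ℂ) {β : ℂ} (hβ : -1 < β.re)
    {a b c : ℂ} (hc : 0 < c.re) {r : ℝ} (hr : 0 < r) :
    IntegrableOn (fun t : ℝ => (t : ℂ) ^ α * ((1 - t : ℝ) : ℂ) ^ β * hyp a b c ((1 - t : ℝ) : ℂ))
      (Ioo r 1) := by
  have hg : ContinuousOn (fun t : ℝ => (t : ℂ) ^ α * hyp a b c ((1 - t : ℝ) : ℂ)) (Icc r 1) := by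
    refine ContinuousOn.mul ?_ ?_
    · exact ContinuousOn.ofReal_cpow (f := fun t => t) (by fun_prop)
        (fun t ht => by linarith [ht.1]) _
    · exact ContinuousOn.hyp_ofReal (f := fun t => 1 - t) hc (by fun_prop)
        fun t ht => abs_lt.2 ⟨by linarith [ht.2], by linarith [ht.1]⟩
  exact (integrableOn_Ioo_one_sub_cpow_mul hβ hg).congr_fun (fun t _ => by ring)
    measurableSet_Ioo

theorem integral_PCP_I1_integrable_general (k₁ k₁₂ s₂ p₁ p₂ : ℝ)
    (h12 : 1 ≤ k₁₂) :
    IntegrableOn (fun t : ℝ =>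
        ((t : ℝ) : ℂ) ^ (-(I * (s₂ : ℂ)) - I * (p₂ : ℂ) - 1 / 2) *
          ((1 - t : ℝ) : ℂ) ^ (-(k₁₂ : ℂ) + I * (p₁ : ℂ) + I * (p₂ : ℂ)) *
          hyp (1 / 2 + k₁ - k₁₂ - I * (s₂ : ℂ)) (3 / 2 - k₁ - k₁₂ - I * (s₂ : ℂ))
            (1 - 2 * I * (s₂ : ℂ)) t)
      (Ioo 0 (1 / 2)) volume ∧
    IntegrableOn (fun t : ℝ =>
        ((t : ℝ) : ℂ) ^ (-(I * (s₂ : ℂ)) - I * (p₂ : ℂ) - 1 / 2) *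
          ((1 - t : ℝ) : ℂ) ^ ((k₁₂ : ℂ) - 1 + I * (p₁ : ℂ) + I * (p₂ : ℂ)) *
          hyp (1 / 2 + k₁ + k₁₂ - I * (s₂ : ℂ)) (-(1 / 2) + k₁ + k₁₂ - I * (s₂ : ℂ))
            (k₁₂ : ℂ) ((1 - t : ℝ) : ℂ))
      (Ioo (1 / 2) 1) volume := by
  refine ⟨integrableOn_Ioo_zero_cpow_mul_one_sub_cpow_mul_hyp (by norm_num) _ (by simp)
    (by norm_num), integrableOn_Ioo_one_cpow_mul_one_sub_cpow_mul_hyp _ ?_ ?_ (by norm_num)⟩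
  · simp only [add_re, sub_re, ofReal_re, one_re, mul_re, I_re, I_im, ofReal_im]
    linarith
  · simpa using zero_lt_one.trans_le h12

/-- Convergence of the two pieces of the integral `I₁(+,C,+)` for the coupling of a
positive discrete series with a continuous series to a positive discrete series. -/
theorem integral_PCP_I1_integrable (k₁ k₁₂ s₂ p₁ p₂ : ℝ)
    (h1 : 1 ≤ k₁) (h12 : 1 ≤ k₁₂) :
    IntegrableOn (fun t : ℝ =>
        ((t : ℝ) : ℂ) ^ (-(I * (s₂ : ℂ)) - I * (p₂ : ℂ) - 1 / 2) *
          ((1 - t : ℝ) : ℂ) ^ (-(k₁₂ : ℂ) + I * (p₁ : ℂ) + I * (p₂ : ℂ)) *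
          hyp (1 / 2 + k₁ - k₁₂ - I * (s₂ : ℂ)) (3 / 2 - k₁ - k₁₂ - I * (s₂ : ℂ))
            (1 - 2 * I * (s₂ : ℂ)) t)
      (Ioo 0 (1 / 2)) volume ∧
    IntegrableOn (fun t : ℝ =>
        ((t : ℝ) : ℂ) ^ (-(I * (s₂ : ℂ)) - I * (p₂ : ℂ) - 1 / 2) *
          ((1 - t : ℝ) : ℂ) ^ ((k₁₂ : ℂ) - 1 + I * (p₁ : ℂ) + I * (p₂ : ℂ)) *
          hyp (1 / 2 + k₁ + k₁₂ - I * (s₂ : ℂ)) (-(1 / 2) + k₁ + k₁₂ - I * (s₂ : ℂ))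
            (k₁₂ : ℂ) ((1 - t : ℝ) : ℂ))
      (Ioo (1 / 2) 1) volume :=
  integral_PCP_I1_integrable_general k₁ k₁₂ s₂ p₁ p₂ h12
end
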